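/- Let (α_n)_{n≥0} be a nested sequence in SL(2,ℝ), set β_n := α_0 * α_1 * ⋯ * α_n and r_n := − Real.log (Im (β_n⁻¹ • i)). Then for every n ≥ 0, |r_{n+1} − r_n| ≤ ℓ(α_{n+1}). -/

import Mathlib

/-!
Put `z_n = β_n⁻¹ • i`, so that `z_{n+1} = α_{n+1}⁻¹ • z_n` and `r_{n+1} - r_n = log ‖c z_n + d‖²`,
where `(c, d)` is the bottom row of `α_{n+1}⁻¹`; this matrix has the same fixed points and the same
translation length as `α_{n+1}`. If `γ` has real fixed points `b < a`, then `γ` divides the power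
of a point with respect to the circle with diameter `[b, a]` by `‖c z + d‖²`, so it preserves the
closed half-disc `D(a, b)` bounded by its axis; and on `D(a, b)` the number `‖c z + d‖²` lies
between `μ⁻²` and `μ²`, where `μ = c a + d` is the multiplier at `a` and `|log μ²| = ℓ(γ)`.
The half-discs of a nested sequence increase with `n`, and `i ∈ D(γ₀⁺, γ₀⁻)` because the axis of
`α₀` meets the imaginary axis above `i`. Hence `z_n ∈ D(γ_{n+1}⁺, γ_{n+1}⁻)` for every `n`.
-/

open UpperHalfPlane Matrix Real Filter Topology
open scoped MatrixGroups

noncomputable section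

namespace BellisFormal

/-- The point `eᵗ i` of the upper half-plane. -/
def vray (t : ℝ) : ℍ := ⟨⟨0, Real.exp t⟩, Real.exp_pos t⟩

/-- Translation length of `γ`. -/
def transLength (γ : SL(2, ℝ)) : ℝ := ⨅ z : ℍ, dist z (γ • z)

/-- `γ` is hyperbolic: `|tr γ| > 2`. -/
def IsHyperbolic (γ : SL(2, ℝ)) : Prop :=
  2 < |Matrix.trace (γ : Matrix (Fin 2) (Fin 2) ℝ)|

/-- Axis of `γ`. -/
def Axis (γ : SL(2, ℝ)) : Set ℍ := {z : ℍ | dist z (γ • z) = transLength γ}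

/-- `x` is a real fixed point of the Möbius map of `γ`. -/
def IsFixedPt (γ : SL(2, ℝ)) (x : ℝ) : Prop :=
  γ 1 0 * x ^ 2 + (γ 1 1 - γ 0 0) * x - γ 0 1 = 0

def IsAttractingFixedPt (γ : SL(2, ℝ)) (x : ℝ) : Prop :=
  IsFixedPt γ x ∧ 1 < (γ 1 0 * x + γ 1 1) ^ 2

def IsRepellingFixedPt (γ : SL(2, ℝ)) (x : ℝ) : Prop :=
  IsFixedPt γ x ∧ (γ 1 0 * x + γ 1 1) ^ 2 < 1

instance : TopologicalSpace SL(2, ℝ) :=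
  TopologicalSpace.induced (fun g => (g : Matrix (Fin 2) (Fin 2) ℝ)) inferInstance

structure IsNestedSequence (γ : ℕ → SL(2, ℝ)) (γp γm : ℕ → ℝ) (t : ℕ → ℝ) : Prop where
  hyperbolic : ∀ n, IsHyperbolic (γ n)
  discrete : DiscreteTopology (Subgroup.closure (Set.range γ) : Subgroup SL(2, ℝ))
  attracting : ∀ n, IsAttractingFixedPt (γ n) (γp n)
  repelling : ∀ n, IsRepellingFixedPt (γ n) (γm n)
  plus_pos : ∀ n, 0 < γp n
  plus_mono : StrictMono γp
  minus_neg : ∀ n, γm n < 0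
  minus_anti : StrictAnti γm
  t_pos : ∀ n, 0 < t n
  axis_meets : ∀ n, ∀ s : ℝ, 0 ≤ s → (vray s ∈ Axis (γ n) ↔ s = t n)
  len_anti : StrictAnti fun n => transLength (γ n)
  len_tendsto : Filter.Tendsto (fun n => transLength (γ n)) Filter.atTop (nhds 0)

/-- geodesic flow matrix -/
def A (t : ℝ) : SL(2, ℝ) :=
  ⟨!![Real.exp (t / 2), 0; 0, Real.exp (-(t / 2))], by
    simp [Matrix.det_fin_two_of, ← Real.exp_add]⟩

/-- horocyclic flow matrix -/
def N (s : ℝ) : SL(2, ℝ) :=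
  ⟨!![1, s; 0, 1], by simp [Matrix.det_fin_two_of]⟩

/-- the distance `d₁` between unit tangent vectors encoded as elements of `SL(2,ℝ)` -/
def d1 (g h : SL(2, ℝ)) : ℝ :=
  dist (g • vray 0) (h • vray 0) + dist (g • vray 1) (h • vray 1)

/-- product `α 0 * α 1 * ⋯ * α n` -/
def seqProd (α : ℕ → SL(2, ℝ)) (n : ℕ) : SL(2, ℝ) :=
  ((List.range (n + 1)).map α).prod


/-- the point `a + y i` of the upper half-plane -/
def mkPt (a y : ℝ) (hy : 0 < y) : ℍ := ⟨⟨a, y⟩, hy⟩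

/-- the Busemann cocycle values `r_n = B_∞(β_n⁻¹ • i, i)` -/
def busR (α : ℕ → SL(2, ℝ)) (n : ℕ) : ℝ :=
  - Real.log (((seqProd α n)⁻¹ • UpperHalfPlane.I).im)

open ComplexConjugate

section Action

variable (γ : SL(2, ℝ)) (z : ℍ)

lemma det_fin_two_eq_one : γ 0 0 * γ 1 1 - γ 0 1 * γ 1 0 = 1 := by
  rw [← Matrix.det_fin_two]; exact γ.det_coe

lemma coe_smul_eq_div : ((γ • z : ℍ) : ℂ) = (γ 0 0 * z + γ 0 1) / (γ 1 0 * z + γ 1 1) := by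
  simp [coe_specialLinearGroup_apply]

lemma denom_ne_zero' : (γ 1 0 * z + γ 1 1 : ℂ) ≠ 0 :=
  UpperHalfPlane.denom_ne_zero (Matrix.SpecialLinearGroup.mapGL ℝ γ) z

lemma im_smul_eq_div_normSq' : (γ • z).im = z.im / Complex.normSq (γ 1 0 * z + γ 1 1) := by
  rw [show γ • z = Matrix.SpecialLinearGroup.mapGL ℝ γ • z from rfl, im_smul_eq_div_normSq]
  simp [denom]

lemma dist_smul_self_eq :
    dist z (γ • z) =
      2 * arsinh (‖γ 1 0 * (z : ℂ) ^ 2 + (γ 1 1 - γ 0 0) * z - γ 0 1‖ / (2 * z.im)) := by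
  have hD := denom_ne_zero' γ z
  have hz := z.im_pos
  have hdist : dist (z : ℂ) (γ • z : ℍ) =
      ‖γ 1 0 * (z : ℂ) ^ 2 + (γ 1 1 - γ 0 0) * z - γ 0 1‖ / ‖(γ 1 0 * z + γ 1 1 : ℂ)‖ := by
    rw [dist_eq_norm, coe_smul_eq_div, ← norm_div, sub_div' hD]
    congr 2
    ring
  have hsqrt : √(z.im * (γ • z).im) = z.im / ‖(γ 1 0 * z + γ 1 1 : ℂ)‖ := by
    rw [im_smul_eq_div_normSq', ← Complex.sq_norm, ← mul_div_assoc, ← sq, ← div_pow]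
    exact Real.sqrt_sq (by positivity)
  rw [UpperHalfPlane.dist_eq, hdist, hsqrt]
  field_simp [norm_ne_zero_iff.mpr hD]

lemma transLength_inv : transLength γ⁻¹ = transLength γ := by
  unfold transLength
  congr 1 with z
  rw [← dist_smul γ, smul_inv_smul, dist_comm]

end Action

namespace IsFixedPt

variable {γ : SL(2, ℝ)} {a b : ℝ}

lemma inv (h : IsFixedPt γ a) : IsFixedPt γ⁻¹ a := by
  unfold IsFixedPt at h ⊢
  rw [Matrix.SpecialLinearGroup.SL2_inv_expl]
  simp only [Matrix.cons_val', Matrix.cons_val_zero, Matrix.cons_val_one, Matrix.empty_val',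
    Matrix.cons_val_fin_one]
  linear_combination -h

lemma sub_mul_denom_eq_one (h : IsFixedPt γ a) :
    (γ 0 0 - γ 1 0 * a) * (γ 1 0 * a + γ 1 1) = 1 := by
  unfold IsFixedPt at h
  linear_combination (-γ 1 0) * h + det_fin_two_eq_one γ

lemma denom_ne_zero (h : IsFixedPt γ a) : γ 1 0 * a + γ 1 1 ≠ 0 :=
  right_ne_zero_of_mul_eq_one h.sub_mul_denom_eq_one

lemma coe_smul_sub (h : IsFixedPt γ a) (z : ℍ) :
    ((γ • z : ℍ) : ℂ) - a = (z - a) / ((γ 1 0 * z + γ 1 1) * ((γ 1 0 * a + γ 1 1 : ℝ) : ℂ)) := by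
  have hD := denom_ne_zero' γ z
  have ha : ((γ 1 0 * a + γ 1 1 : ℝ) : ℂ) ≠ 0 := by exact_mod_cast h.denom_ne_zero
  have h1 : ((γ 0 0 - γ 1 0 * a) * (γ 1 0 * a + γ 1 1) : ℝ) = (1 : ℂ) := by
    exact_mod_cast h.sub_mul_denom_eq_one
  have h2 : ((γ 0 0 * γ 1 1 - γ 0 1 * γ 1 0 : ℝ) : ℂ) = 1 := by
    exact_mod_cast det_fin_two_eq_one γ
  have h3 : ((γ 1 0 * a ^ 2 + (γ 1 1 - γ 0 0) * a - γ 0 1 : ℝ) : ℂ) = 0 := by exact_mod_cast h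
  push_cast at h1 h2 h3 ha ⊢
  rw [coe_smul_eq_div, div_sub' hD, div_eq_div_iff hD (mul_ne_zero hD ha)]
  linear_combination (γ 1 0 * z + γ 1 1 : ℂ) * (z * h1 - γ 1 1 * h3 - a * h2)

lemma mul_add_eq_sub (ha : IsFixedPt γ a) (hb : IsFixedPt γ b) (hab : a ≠ b) :
    γ 1 0 * (a + b) = γ 0 0 - γ 1 1 := by
  unfold IsFixedPt at ha hb
  have : (a - b) * (γ 1 0 * (a + b) - (γ 0 0 - γ 1 1)) = 0 := by
    linear_combination ha - hb
  simpa [sub_eq_zero, hab] using this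

lemma denom_mul_denom (ha : IsFixedPt γ a) (hb : IsFixedPt γ b) (hab : a ≠ b) :
    (γ 1 0 * a + γ 1 1) * (γ 1 0 * b + γ 1 1) = 1 := by
  linear_combination ha.sub_mul_denom_eq_one + (γ 1 0 * a + γ 1 1) * mul_add_eq_sub ha hb hab

lemma quadratic_eq (ha : IsFixedPt γ a) (hb : IsFixedPt γ b) (hab : a ≠ b) (w : ℂ) :
    γ 1 0 * w ^ 2 + (γ 1 1 - γ 0 0) * w - γ 0 1 = γ 1 0 * (w - a) * (w - b) := by
  have hs : ((γ 1 0 * (a + b) : ℝ) : ℂ) = (γ 0 0 - γ 1 1 : ℝ) := by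
    exact_mod_cast mul_add_eq_sub ha hb hab
  have ha' : ((γ 1 0 * a ^ 2 + (γ 1 1 - γ 0 0) * a - γ 0 1 : ℝ) : ℂ) = 0 := by exact_mod_cast ha
  push_cast at hs ha'
  linear_combination (w - a) * hs + ha'

end IsFixedPt

section SubMulConjSub

variable (w : ℂ) (a b : ℝ)

lemma re_sub_mul_conj_sub : ((w - a) * conj (w - b)).re = (w.re - a) * (w.re - b) + w.im ^ 2 := by
  simp [Complex.mul_re]; ring

lemma im_sub_mul_conj_sub : ((w - a) * conj (w - b)).im = (a - b) * w.im := by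
  simp [Complex.mul_im]; ring

lemma norm_sub_mul_norm_sub : ‖w - a‖ * ‖w - b‖ = ‖(w - a) * conj (w - b)‖ := by
  rw [norm_mul, Complex.norm_conj]

lemma mul_im_le_norm_sub_mul_norm_sub : (a - b) * w.im ≤ ‖w - a‖ * ‖w - b‖ := by
  rw [norm_sub_mul_norm_sub, ← im_sub_mul_conj_sub]
  exact Complex.im_le_norm _

lemma norm_sub_mul_norm_sub_eq_iff (h : 0 ≤ (a - b) * w.im) :
    ‖w - a‖ * ‖w - b‖ = (a - b) * w.im ↔ (w.re - a) * (w.re - b) + w.im ^ 2 = 0 := by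
  rw [← im_sub_mul_conj_sub] at h
  rw [norm_sub_mul_norm_sub, ← im_sub_mul_conj_sub, ← re_sub_mul_conj_sub, ← abs_of_nonneg h,
    eq_comm, Complex.abs_im_eq_norm]

end SubMulConjSub

lemma abs_log_sq_eq_two_arsinh {μ ν : ℝ} (h : μ * ν = 1) :
    |log (μ ^ 2)| = 2 * arsinh (|μ - ν| / 2) := by
  have hμ : 0 < |μ| := abs_pos.mpr (left_ne_zero_of_mul_eq_one h)
  have hν : |ν| = |μ|⁻¹ := eq_inv_of_mul_eq_one_right (by rw [← abs_mul, h, abs_one])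
  have hsub : |μ - ν| = |(|μ| - |ν|)| := by
    rw [← sq_eq_sq_iff_abs_eq_abs, sub_sq, sub_sq, sq_abs, sq_abs, mul_assoc, mul_assoc,
      ← abs_mul, h, abs_one]
  have hsinh : sinh |log (|μ|)| = |μ - ν| / 2 := by
    rw [← abs_sinh, sinh_log hμ, hsub, hν, abs_div, abs_two]
  rw [← sq_abs, log_pow, ← hsinh, arsinh_sinh, abs_mul]
  norm_num

lemma log_sq_eq_neg_log_sq {μ ν : ℝ} (h : μ * ν = 1) : log (ν ^ 2) = -log (μ ^ 2) := by
  rw [← log_inv, ← inv_pow, inv_eq_of_mul_eq_one_right h]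

lemma abs_log_le_abs_log_sq {μ ν u w : ℝ} (h : μ * ν = 1) (hw : 0 ≤ w)
    (hu : (u - μ) * (u - ν) + w ≤ 0) : |log (u ^ 2 + w)| ≤ |log (μ ^ 2)| := by
  wlog hνμ : ν ^ 2 ≤ μ ^ 2 generalizing μ ν
  · rw [← abs_neg (log (μ ^ 2)), ← log_sq_eq_neg_log_sq h]
    exact this (by rwa [mul_comm]) (by linarith) (le_of_not_ge hνμ)
  -- `u` lies between `ν` and `μ`, which have the same sign as `μ ν = 1`
  have hlo : ν ^ 2 ≤ u ^ 2 + w := by nlinarith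
  have hhi : u ^ 2 + w ≤ μ ^ 2 := by nlinarith
  have hν : 0 < ν ^ 2 := by positivity [right_ne_zero_of_mul_eq_one h]
  have hlog_lo := log_le_log hν hlo
  rw [log_sq_eq_neg_log_sq h] at hlog_lo
  exact abs_le_abs (log_le_log (hν.trans_le hlo) hhi) (by linarith)

section FixedPoints

variable {γ : SL(2, ℝ)} {a b : ℝ}

lemma dist_smul_self_eq_of_isFixedPt (ha : IsFixedPt γ a) (hb : IsFixedPt γ b) (hab : a ≠ b)
    (z : ℍ) :
    dist z (γ • z) = 2 * arsinh (|γ 1 0| * (‖(z : ℂ) - a‖ * ‖(z : ℂ) - b‖) / (2 * z.im)) := by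
  rw [dist_smul_self_eq, ha.quadratic_eq hb hab, norm_mul, norm_mul, Complex.norm_real,
    Real.norm_eq_abs, mul_assoc]

theorem transLength_eq_of_isFixedPt (ha : IsFixedPt γ a) (hb : IsFixedPt γ b) (hba : b < a) :
    transLength γ = 2 * arsinh (|γ 1 0| * (a - b) / 2) := by
  have hdist := dist_smul_self_eq_of_isFixedPt ha hb hba.ne'
  have hle (z : ℍ) : 2 * arsinh (|γ 1 0| * (a - b) / 2) ≤ dist z (γ • z) := by
    have hz := z.im_pos
    have hnorm := mul_im_le_norm_sub_mul_norm_sub (z : ℂ) a b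
    rw [coe_im] at hnorm
    rw [hdist]
    gcongr 2 * arsinh ?_
    rw [div_le_div_iff₀ two_pos (by positivity)]
    nlinarith [abs_nonneg (γ 1 0)]
  let top : ℍ := mkPt ((a + b) / 2) ((a - b) / 2) (by linarith)
  have hre : (top : ℂ).re = (a + b) / 2 := rfl
  have him : (top : ℂ).im = (a - b) / 2 := rfl
  have htop : dist top (γ • top) = 2 * arsinh (|γ 1 0| * (a - b) / 2) := by
    have hnorm := (norm_sub_mul_norm_sub_eq_iff (top : ℂ) a b (by rw [him]; nlinarith)).mpr
      (by rw [hre, him]; ring)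
    rw [hdist, hnorm, ← coe_im, him]
    field_simp
  refine le_antisymm ?_ (le_ciInf hle)
  rw [← htop]
  exact ciInf_le ⟨0, by rintro _ ⟨z, rfl⟩; exact dist_nonneg⟩ top

end FixedPoints

/-- The power of `z` with respect to the circle with diameter `[b, a]`. -/
def circlePower (a b : ℝ) (z : ℍ) : ℝ := (z.re - a) * (z.re - b) + z.im ^ 2

lemma circlePower_eq_re (a b : ℝ) (z : ℍ) :
    circlePower a b z = (((z : ℂ) - a) * conj ((z : ℂ) - b)).re :=
  (re_sub_mul_conj_sub _ a b).symm

section CirclePower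

variable {γ : SL(2, ℝ)} {a b : ℝ}

lemma circlePower_nonpos_mono {a' b' : ℝ} {z : ℍ} (hba : b < a) (hb : b' ≤ b) (ha : a ≤ a')
    (h : circlePower a b z ≤ 0) : circlePower a' b' z ≤ 0 := by
  unfold circlePower at *
  have hy := z.im_pos
  have hxb : b < z.re := by nlinarith
  have hxa : z.re < a := by nlinarith
  nlinarith [mul_nonneg (sub_nonneg.mpr ha) (sub_pos.mpr hxb).le,
    mul_nonneg (sub_nonneg.mpr hb) (sub_pos.mpr hxa).le,
    mul_nonneg (sub_nonneg.mpr ha) (sub_nonneg.mpr hb)]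

theorem circlePower_eq_zero_of_mem_axis (ha : IsFixedPt γ a) (hb : IsFixedPt γ b) (hba : b < a)
    (hr : γ 1 0 ≠ 0) {z : ℍ} (hz : z ∈ Axis γ) : circlePower a b z = 0 := by
  have hy := z.im_pos
  rw [Axis, Set.mem_ofPred_eq, transLength_eq_of_isFixedPt ha hb hba,
    dist_smul_self_eq_of_isFixedPt ha hb hba.ne', mul_right_inj' two_ne_zero, arsinh_inj,
    div_eq_div_iff (by positivity) two_ne_zero] at hz
  have hprod : |γ 1 0| * (‖(z : ℂ) - a‖ * ‖(z : ℂ) - b‖ - (a - b) * (z : ℂ).im) = 0 := by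
    rw [coe_im]; linear_combination hz / 2
  rw [circlePower, ← coe_re, ← coe_im]
  refine (norm_sub_mul_norm_sub_eq_iff _ a b (by rw [coe_im]; nlinarith)).mp ?_
  exact sub_eq_zero.mp ((mul_eq_zero.mp hprod).resolve_left (abs_ne_zero.mpr hr))

lemma circlePower_smul (ha : IsFixedPt γ a) (hb : IsFixedPt γ b) (hab : a ≠ b) (z : ℍ) :
    circlePower a b (γ • z) = circlePower a b z / Complex.normSq (γ 1 0 * z + γ 1 1) := by
  have hμν : ((γ 1 0 * a + γ 1 1 : ℝ) : ℂ) * ((γ 1 0 * b + γ 1 1 : ℝ) : ℂ) = 1 := by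
    exact_mod_cast ha.denom_mul_denom hb hab
  rw [circlePower_eq_re, circlePower_eq_re, ha.coe_smul_sub, hb.coe_smul_sub, map_div₀, map_mul,
    Complex.conj_ofReal, div_mul_div_comm, mul_mul_mul_comm, hμν, mul_one, Complex.mul_conj,
    Complex.div_ofReal_re]

lemma circlePower_smul_nonpos (ha : IsFixedPt γ a) (hb : IsFixedPt γ b) (hab : a ≠ b) {z : ℍ}
    (hz : circlePower a b z ≤ 0) : circlePower a b (γ • z) ≤ 0 := by
  rw [circlePower_smul ha hb hab]
  exact div_nonpos_of_nonpos_of_nonneg hz (Complex.normSq_nonneg _)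

theorem abs_log_im_smul_sub_le (ha : IsFixedPt γ a) (hb : IsFixedPt γ b) (hba : b < a) {z : ℍ}
    (hz : circlePower a b z ≤ 0) : |log (γ • z).im - log z.im| ≤ transLength γ := by
  have hμν := ha.denom_mul_denom hb hba.ne'
  have hnormSq : Complex.normSq (γ 1 0 * z + γ 1 1) =
      (γ 1 0 * z.re + γ 1 1) ^ 2 + (γ 1 0 * z.im) ^ 2 := by
    simp [Complex.normSq_apply]; ring
  have hpower : (γ 1 0 * z.re + γ 1 1 - (γ 1 0 * a + γ 1 1)) *
      (γ 1 0 * z.re + γ 1 1 - (γ 1 0 * b + γ 1 1)) + (γ 1 0 * z.im) ^ 2 ≤ 0 := by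
    have hscale : (γ 1 0 * z.re + γ 1 1 - (γ 1 0 * a + γ 1 1)) *
        (γ 1 0 * z.re + γ 1 1 - (γ 1 0 * b + γ 1 1)) + (γ 1 0 * z.im) ^ 2 =
        γ 1 0 ^ 2 * circlePower a b z := by
      unfold circlePower; ring
    rw [hscale]
    exact mul_nonpos_of_nonneg_of_nonpos (sq_nonneg _) hz
  have hbound := abs_log_le_abs_log_sq hμν (sq_nonneg _) hpower
  have hdiff : |γ 1 0 * a + γ 1 1 - (γ 1 0 * b + γ 1 1)| = |γ 1 0| * (a - b) := by
    rw [add_sub_add_right_eq_sub, ← mul_sub, abs_mul, abs_of_pos (sub_pos.mpr hba)]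
  rw [abs_log_sq_eq_two_arsinh hμν, hdiff, ← transLength_eq_of_isFixedPt ha hb hba,
    ← hnormSq] at hbound
  rwa [im_smul_eq_div_normSq', log_div z.im_pos.ne'
    (Complex.normSq_pos.mpr (denom_ne_zero' γ z)).ne', sub_sub_cancel_left, abs_neg]

lemma apply_one_zero_ne_zero (ha : IsAttractingFixedPt γ a) (hb : IsRepellingFixedPt γ b) :
    γ 1 0 ≠ 0 := by
  intro hr
  have hμ := ha.2
  have hν := hb.2
  simp only [hr, zero_mul, zero_add] at hμ hν
  linarith

lemma circlePower_I_nonpos_of_vray_mem_axis {t : ℝ} (ha : IsFixedPt γ a) (hb : IsFixedPt γ b)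
    (hba : b < a) (hr : γ 1 0 ≠ 0) (ht : 0 ≤ t) (hv : vray t ∈ Axis γ) :
    circlePower a b I ≤ 0 := by
  have h := circlePower_eq_zero_of_mem_axis ha hb hba hr hv
  have hexp : 1 ≤ exp t := one_le_exp ht
  change (0 - a) * (0 - b) + exp t ^ 2 = 0 at h
  simp only [circlePower, I_re, I_im]
  nlinarith

end CirclePower

lemma seqProd_zero (α : ℕ → SL(2, ℝ)) : seqProd α 0 = α 0 := by
  simp [seqProd]

lemma seqProd_inv_smul_succ (α : ℕ → SL(2, ℝ)) (n : ℕ) (z : ℍ) :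
    (seqProd α (n + 1))⁻¹ • z = (α (n + 1))⁻¹ • (seqProd α n)⁻¹ • z := by
  rw [seqProd, List.range_succ, List.map_append, List.prod_append, ← seqProd]
  simp [mul_smul]

namespace IsNestedSequence

variable {α : ℕ → SL(2, ℝ)} {γp γm t : ℕ → ℝ}

lemma repelling_lt_attracting (h : IsNestedSequence α γp γm t) (k : ℕ) : γm k < γp k :=
  (h.minus_neg k).trans (h.plus_pos k)

lemma circlePower_succ_nonpos (h : IsNestedSequence α γp γm t) {k : ℕ} {z : ℍ}
    (hz : circlePower (γp k) (γm k) z ≤ 0) :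
    circlePower (γp (k + 1)) (γm (k + 1)) z ≤ 0 :=
  circlePower_nonpos_mono (h.repelling_lt_attracting k) (h.minus_anti k.lt_succ_self).le
    (h.plus_mono k.lt_succ_self).le hz

lemma circlePower_inv_smul_nonpos (h : IsNestedSequence α γp γm t) {k : ℕ} {z : ℍ}
    (hz : circlePower (γp k) (γm k) z ≤ 0) :
    circlePower (γp k) (γm k) ((α k)⁻¹ • z) ≤ 0 :=
  circlePower_smul_nonpos (h.attracting k).1.inv (h.repelling k).1.inv
    (h.repelling_lt_attracting k).ne' hz

lemma circlePower_seqProd_inv_smul_I_nonpos (h : IsNestedSequence α γp γm t) (k : ℕ) :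
    circlePower (γp k) (γm k) ((seqProd α k)⁻¹ • I) ≤ 0 := by
  induction k with
  | zero =>
    rw [seqProd_zero]
    exact h.circlePower_inv_smul_nonpos <| circlePower_I_nonpos_of_vray_mem_axis
      (h.attracting 0).1 (h.repelling 0).1 (h.repelling_lt_attracting 0)
      (apply_one_zero_ne_zero (h.attracting 0) (h.repelling 0)) (h.t_pos 0).le
      ((h.axis_meets 0 _ (h.t_pos 0).le).mpr rfl)
  | succ k ih =>
    rw [seqProd_inv_smul_succ]
    exact h.circlePower_inv_smul_nonpos (h.circlePower_succ_nonpos ih)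

end IsNestedSequence

theorem busemann_increment_bound
    (α : ℕ → SL(2, ℝ)) (γp γm tax : ℕ → ℝ) (h : IsNestedSequence α γp γm tax) :
    ∀ n : ℕ, |busR α (n + 1) - busR α n| ≤ transLength (α (n + 1)) := by
  intro n
  have hbound := abs_log_im_smul_sub_le (h.attracting (n + 1)).1.inv
    (h.repelling (n + 1)).1.inv (h.repelling_lt_attracting (n + 1))
    (h.circlePower_succ_nonpos (h.circlePower_seqProd_inv_smul_I_nonpos n))
  rw [transLength_inv, ← seqProd_inv_smul_succ] at hbound
  rwa [busR, busR, neg_sub_neg, abs_sub_comm]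

end BellisFormal
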